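/- arXiv:1907.05325 — 2 statements merged into one kernel-verified Lean document; each statement's English description precedes it below -/
import Mathlib

section
/- (Deterministic recovery bound for nuclear-norm-regularized least squares.) Let p > 0, λ > 0, let M be an entrywise-nonnegative m×n real matrix of rank at most r, and let Y be any m×n real matrix with ‖Y − pM‖ ≤ λ/(2p). If M̂ minimizes ‖Y − pM'‖_F² + λ‖M'‖_* over all entrywise-nonnegative m×n matrices M', then ‖M̂ − M‖_F ≤ 2√(2r)·λ/p². -/
open MeasureTheory ProbabilityTheory Real Matrix

/-- Frobenius norm of a real matrix. -/
noncomputable def frobNorm {m n : ℕ} (A : Matrix (Fin m) (Fin n) ℝ) : ℝ :=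
  Real.sqrt (∑ i, ∑ j, (A i j)^2)

/-- ℓ2→ℓ2 operator norm of a real matrix. -/
noncomputable def opNorm {m n : ℕ} (A : Matrix (Fin m) (Fin n) ℝ) : ℝ :=
  ‖LinearMap.toContinuousLinearMap (Matrix.toEuclideanLin A)‖

/-- Nuclear norm: trace of the psd square root of Aᵀ * A. -/
noncomputable def nucNorm {m n : ℕ} (A : Matrix (Fin m) (Fin n) ℝ) : ℝ :=
  let hA := (Matrix.posSemidef_conjTranspose_mul_self A).1
  ((hA.eigenvectorUnitary : Matrix (Fin n) (Fin n) ℝ) *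
    Matrix.diagonal (fun i => Real.sqrt (hA.eigenvalues i)) *
    (star hA.eigenvectorUnitary : Matrix (Fin n) (Fin n) ℝ)).trace

/-!
Write `E = Y - p • M` and `Δ = M̂ - M`. Comparing the objective at `M̂` and at `M` gives
`p² ‖Δ‖_F² ≤ 2p ⟨E, Δ⟩ + λ (‖M‖_* - ‖M + Δ‖_*)`, and trace duality
`⟨E, Δ⟩ ≤ ‖E‖ ‖Δ‖_* ≤ λ / (2p) ‖Δ‖_*` turns this into
`p² ‖Δ‖_F² ≤ λ (‖Δ‖_* + ‖M‖_* - ‖M + Δ‖_*)`.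
Let `P`, `Q` be the orthogonal projections onto the column and row spaces of `M` and split
`Δ = Δ₁ + D` with `D = (1 - P) Δ (1 - Q)`. Since `D` is orthogonal to `M` on both sides,
`‖M + D‖_* = ‖M‖_* + ‖D‖_*`, so by the triangle inequality the bracket is at most `2 ‖Δ₁‖_*`.
Finally `rank Δ₁ ≤ 2r` and `‖Δ₁‖_F ≤ ‖Δ‖_F`, so `‖Δ₁‖_* ≤ √(2r) ‖Δ‖_F`, and dividing by `‖Δ‖_F`
gives the bound.
-/

open scoped Matrix.Norms.L2Operator InnerProductSpace

namespace Matrix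

lemma trace_conjTranspose_mul_comm {m n : Type*} [Fintype m] [Fintype n] (A B : Matrix m n ℝ) :
    (Bᴴ * A).trace = (Aᴴ * B).trace := by
  rw [← conjTranspose_conjTranspose A, ← conjTranspose_mul, trace_conjTranspose,
    conjTranspose_conjTranspose, star_trivial]

lemma rank_add_le {m n K : Type*} [Fintype n] [Field K] (A B : Matrix m n K) :
    (A + B).rank ≤ A.rank + B.rank := by
  unfold rank
  rw [mulVecLin_add]
  calc Module.finrank K (LinearMap.range (A.mulVecLin + B.mulVecLin))
      ≤ Module.finrank K ↥(LinearMap.range A.mulVecLin ⊔ LinearMap.range B.mulVecLin) :=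
        Submodule.finrank_mono <| by
          rintro x ⟨y, rfl⟩
          exact Submodule.add_mem_sup ⟨y, rfl⟩ ⟨y, rfl⟩
    _ ≤ _ := Submodule.finrank_add_le_finrank_add_finrank _ _

section FunctionalCalculus

variable {n : Type*} [Fintype n] [DecidableEq n]

lemma cfc_mul_cfc (A : Matrix n n ℝ) (f g : ℝ → ℝ) :
    cfc f A * cfc g A = cfc (fun x => f x * g x) A :=
  (cfc_mul f g A (A.finite_real_spectrum.continuousOn f)
    (A.finite_real_spectrum.continuousOn g)).symm

lemma conjTranspose_cfc (A : Matrix n n ℝ) (f : ℝ → ℝ) : (cfc f A)ᴴ = cfc f A :=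
  (cfc_predicate f A).star_eq

lemma IsHermitian.trace_cfc {A : Matrix n n ℝ} (hA : A.IsHermitian) (f : ℝ → ℝ) :
    (cfc f A).trace = ∑ i, f (hA.eigenvalues i) := by
  rw [hA.cfc_eq, IsHermitian.cfc, Unitary.conjStarAlgAut_apply, trace_mul_cycle,
    Unitary.coe_star_mul_self, one_mul, trace_diagonal]
  rfl

lemma IsHermitian.cfc_mul_id {A : Matrix n n ℝ} (hA : A.IsHermitian) (f : ℝ → ℝ) :
    cfc f A * A = cfc (fun x => f x * x) A := by
  conv_lhs => arg 2; rw [← cfc_id' ℝ A hA]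
  exact cfc_mul_cfc A f _

lemma IsHermitian.id_mul_cfc {A : Matrix n n ℝ} (hA : A.IsHermitian) (f : ℝ → ℝ) :
    A * cfc f A = cfc (fun x => f x * x) A :=
  calc A * cfc f A = (cfc f A * A)ᴴ := by rw [conjTranspose_mul, conjTranspose_cfc, hA.eq]
    _ = _ := by rw [hA.cfc_mul_id, conjTranspose_cfc]

lemma cfc_sqrt_mul_cfc_sqrt_eq_zero {S T : Matrix n n ℝ} (hS : S.IsHermitian)
    (hT : T.IsHermitian) (h : S * T = 0) : cfc Real.sqrt S * cfc Real.sqrt T = 0 := by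
  have hsqrt (x : ℝ) : (√x)⁻¹ * x = √x := by rw [inv_mul_eq_div, Real.div_sqrt]
  rw [← cfc_congr (a := S) fun x _ => hsqrt x, ← cfc_congr (a := T) fun x _ => hsqrt x,
    ← hS.cfc_mul_id, ← hT.id_mul_cfc, Matrix.mul_assoc, ← Matrix.mul_assoc S, h,
    Matrix.zero_mul, Matrix.mul_zero]

open scoped MatrixOrder in
lemma cfc_sqrt_add_of_mul_eq_zero {S T : Matrix n n ℝ} (hS : 0 ≤ S) (hT : 0 ≤ T)
    (h : S * T = 0) : cfc Real.sqrt (S + T) = cfc Real.sqrt S + cfc Real.sqrt T := by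
  have hS' := IsSelfAdjoint.of_nonneg hS
  have hT' := IsSelfAdjoint.of_nonneg hT
  have hTS : T * S = 0 := by simpa [hS'.star_eq, hT'.star_eq] using congrArg star h
  have hsqrt {X : Matrix n n ℝ} (hX : 0 ≤ X) : cfc Real.sqrt X = CFC.sqrt X := by
    rw [CFC.sqrt_eq_real_sqrt X hX, cfcₙ_eq_cfc]
  rw [hsqrt hS, hsqrt hT, hsqrt (add_nonneg hS hT)]
  refine CFC.sqrt_unique ?_ (add_nonneg (CFC.sqrt_nonneg S) (CFC.sqrt_nonneg T))
  rw [Matrix.add_mul, Matrix.mul_add, Matrix.mul_add, CFC.sqrt_mul_sqrt_self S hS,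
    CFC.sqrt_mul_sqrt_self T hT, ← hsqrt hS, ← hsqrt hT, cfc_sqrt_mul_cfc_sqrt_eq_zero hS' hT' h,
    cfc_sqrt_mul_cfc_sqrt_eq_zero hT' hS' hTS, add_zero, zero_add]

end FunctionalCalculus

section RangeProjection

variable {m n : Type*} [Fintype m] [Fintype n] [DecidableEq m]

/-- The orthogonal projection onto the column space of `A`: as `0⁻¹ = 0`, the function
`x ↦ x⁻¹ * x` is the indicator of `x ≠ 0`. -/
noncomputable def rangeProj (A : Matrix m n ℝ) : Matrix m m ℝ :=
  cfc (fun x : ℝ => x⁻¹ * x) (A * Aᴴ)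

lemma conjTranspose_rangeProj (A : Matrix m n ℝ) : (rangeProj A)ᴴ = rangeProj A :=
  conjTranspose_cfc _ _

lemma isIdempotentElem_rangeProj (A : Matrix m n ℝ) : IsIdempotentElem (rangeProj A) := by
  rw [IsIdempotentElem, rangeProj, cfc_mul_cfc]
  congr 1; ext x
  rcases eq_or_ne x 0 with rfl | hx <;> simp [*]

lemma rangeProj_mul (A : Matrix m n ℝ) : rangeProj A * A = A := by
  have hH := isHermitian_mul_conjTranspose_self A
  have hPH : rangeProj A * (A * Aᴴ) = A * Aᴴ := by
    conv_rhs => rw [← cfc_id' ℝ (A * Aᴴ) hH]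
    rw [rangeProj, hH.cfc_mul_id]
    congr 1; ext x
    rcases eq_or_ne x 0 with rfl | hx <;> simp [*]
  have hzero : ((1 - rangeProj A) * A) * ((1 - rangeProj A) * A)ᴴ = 0 := by
    rw [conjTranspose_mul]
    simp only [Matrix.mul_assoc]
    rw [← Matrix.mul_assoc A, ← Matrix.mul_assoc, Matrix.sub_mul, Matrix.one_mul, hPH, sub_self,
      Matrix.zero_mul]
  rw [self_mul_conjTranspose_eq_zero, Matrix.sub_mul, Matrix.one_mul, sub_eq_zero] at hzero
  exact hzero.symm

lemma rank_rangeProj_le (A : Matrix m n ℝ) : (rangeProj A).rank ≤ A.rank := by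
  have hH := isHermitian_mul_conjTranspose_self A
  calc (rangeProj A).rank = (cfc (fun x : ℝ => x⁻¹) (A * Aᴴ) * (A * Aᴴ)).rank := by
        rw [hH.cfc_mul_id, rangeProj]
    _ ≤ (A * Aᴴ).rank := rank_mul_le_right _ _
    _ = A.rank := rank_self_mul_conjTranspose A

end RangeProjection

section EuclideanSpace

variable {𝕜 m n : Type*} [RCLike 𝕜] [Fintype m] [Fintype n] [DecidableEq n]

lemma norm_toEuclideanLin_le (A : Matrix m n 𝕜) (x : EuclideanSpace 𝕜 n) :
    ‖toEuclideanLin A x‖ ≤ ‖A‖ * ‖x‖ :=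
  (toEuclideanLin.trans LinearMap.toContinuousLinearMap A).le_opNorm x

lemma l2_opNorm_le_one_of_isIdempotentElem {U : Matrix m n 𝕜} (h : IsIdempotentElem (Uᴴ * U)) :
    ‖U‖ ≤ 1 := by
  have hP : ‖Uᴴ * U‖ = ‖Uᴴ * U‖ * ‖Uᴴ * U‖ :=
    calc ‖Uᴴ * U‖ = ‖(Uᴴ * U)ᴴ * (Uᴴ * U)‖ := by
          rw [conjTranspose_mul, conjTranspose_conjTranspose, h.eq]
      _ = _ := l2_opNorm_conjTranspose_mul_self _
  rw [l2_opNorm_conjTranspose_mul_self] at hP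
  have : ‖U‖ * ‖U‖ ≤ 1 := by nlinarith
  nlinarith [norm_nonneg U]

lemma trace_eq_sum_inner {ι : Type*} [Fintype ι] (X : Matrix n n 𝕜)
    (b : OrthonormalBasis ι 𝕜 (EuclideanSpace 𝕜 n)) :
    X.trace = ∑ i, ⟪b i, toEuclideanLin X (b i)⟫_𝕜 := by
  rw [← LinearMap.trace_eq_sum_inner, toEuclideanLin_eq_toLin_orthonormal, trace_toLin_eq]

variable [DecidableEq m]

lemma inner_toEuclideanLin_conjTranspose_mul (E B : Matrix m n 𝕜) (x y : EuclideanSpace 𝕜 n) :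
    ⟪x, toEuclideanLin (Eᴴ * B) y⟫_𝕜 = ⟪toEuclideanLin E x, toEuclideanLin B y⟫_𝕜 := by
  rw [toLpLin_mul_same, toEuclideanLin_conjTranspose_eq_adjoint, LinearMap.comp_apply,
    LinearMap.adjoint_inner_right]

lemma norm_toEuclideanLin_eigenvectorBasis (B : Matrix m n ℝ) (i : n) :
    ‖toEuclideanLin B ((isHermitian_conjTranspose_mul_self B).eigenvectorBasis i)‖ =
      √((isHermitian_conjTranspose_mul_self B).eigenvalues i) := by
  set hH := isHermitian_conjTranspose_mul_self B
  set v := hH.eigenvectorBasis i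
  have hv : toEuclideanLin (Bᴴ * B) v = hH.eigenvalues i • v := by
    rw [toLpLin_apply, hH.mulVec_eigenvectorBasis i]; rfl
  rw [← Real.sqrt_sq (norm_nonneg _), ← real_inner_self_eq_norm_sq,
    ← inner_toEuclideanLin_conjTranspose_mul, hv, real_inner_smul_right,
    real_inner_self_eq_norm_sq, hH.eigenvectorBasis.orthonormal.1 i, one_pow, mul_one]

end EuclideanSpace

end Matrix

lemma le_div_of_mul_sq_le_mul {a c x : ℝ} (ha : 0 < a) (hc : 0 ≤ c) (hx : 0 ≤ x)
    (h : a * x ^ 2 ≤ c * x) : x ≤ c / a := by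
  rw [le_div_iff₀ ha]
  rcases hx.eq_or_lt with rfl | hx
  · simpa using hc
  · nlinarith

open Matrix

variable {m n : ℕ}

lemma opNorm_eq_norm (A : Matrix (Fin m) (Fin n) ℝ) : opNorm A = ‖A‖ := rfl

lemma frobNorm_nonneg (A : Matrix (Fin m) (Fin n) ℝ) : 0 ≤ frobNorm A := Real.sqrt_nonneg _

lemma frobNorm_sq_eq_trace (A : Matrix (Fin m) (Fin n) ℝ) :
    frobNorm A ^ 2 = (Aᴴ * A).trace := by
  rw [frobNorm, Real.sq_sqrt (by positivity), Finset.sum_comm]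
  simp [Matrix.trace, Matrix.mul_apply, sq]

lemma frobNorm_sub_sq (A B : Matrix (Fin m) (Fin n) ℝ) :
    frobNorm (A - B) ^ 2 = frobNorm A ^ 2 - 2 * (Aᴴ * B).trace + frobNorm B ^ 2 := by
  rw [frobNorm_sq_eq_trace, frobNorm_sq_eq_trace, frobNorm_sq_eq_trace, conjTranspose_sub,
    Matrix.sub_mul, Matrix.mul_sub, Matrix.mul_sub, trace_sub, trace_sub, trace_sub,
    trace_conjTranspose_mul_comm A B]
  ring

lemma frobNorm_smul_sq (c : ℝ) (A : Matrix (Fin m) (Fin n) ℝ) :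
    frobNorm (c • A) ^ 2 = c ^ 2 * frobNorm A ^ 2 := by
  rw [frobNorm_sq_eq_trace, frobNorm_sq_eq_trace, conjTranspose_smul, star_trivial,
    Matrix.smul_mul, Matrix.mul_smul, smul_smul, trace_smul, smul_eq_mul, sq]

lemma nucNorm_eq_trace_cfc_sqrt (A : Matrix (Fin m) (Fin n) ℝ) :
    nucNorm A = (cfc Real.sqrt (Aᴴ * A)).trace := by
  rw [(isHermitian_conjTranspose_mul_self A).cfc_eq, IsHermitian.cfc,
    Unitary.conjStarAlgAut_apply]
  rfl

lemma nucNorm_eq_sum_sqrt_eigenvalues (A : Matrix (Fin m) (Fin n) ℝ) :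
    nucNorm A = ∑ i, √((isHermitian_conjTranspose_mul_self A).eigenvalues i) := by
  rw [nucNorm_eq_trace_cfc_sqrt, IsHermitian.trace_cfc]

lemma nucNorm_nonneg (A : Matrix (Fin m) (Fin n) ℝ) : 0 ≤ nucNorm A := by
  rw [nucNorm_eq_sum_sqrt_eigenvalues]
  positivity

lemma nucNorm_neg (A : Matrix (Fin m) (Fin n) ℝ) : nucNorm (-A) = nucNorm A := by
  simp only [nucNorm_eq_trace_cfc_sqrt, conjTranspose_neg, Matrix.neg_mul, Matrix.mul_neg,
    neg_neg]

lemma trace_conjTranspose_mul_le_opNorm_mul_nucNorm (E B : Matrix (Fin m) (Fin n) ℝ) :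
    (Eᴴ * B).trace ≤ opNorm E * nucNorm B := by
  set b := (isHermitian_conjTranspose_mul_self B).eigenvectorBasis
  rw [trace_eq_sum_inner _ b, nucNorm_eq_sum_sqrt_eigenvalues, Finset.mul_sum]
  refine Finset.sum_le_sum fun i _ => ?_
  rw [inner_toEuclideanLin_conjTranspose_mul, ← norm_toEuclideanLin_eigenvectorBasis]
  calc _ ≤ ‖toEuclideanLin E (b i)‖ * ‖toEuclideanLin B (b i)‖ := real_inner_le_norm _ _
    _ ≤ opNorm E * ‖toEuclideanLin B (b i)‖ := by
        gcongr
        calc _ ≤ ‖E‖ * ‖b i‖ := E.norm_toEuclideanLin_le _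
          _ = opNorm E := by rw [b.orthonormal.1 i, mul_one, opNorm_eq_norm]

-- `U = B (BᴴB)^(-1/2)` is the partial isometry of the polar decomposition `B = U √(BᴴB)`.
lemma exists_opNorm_le_one_trace_eq_nucNorm (B : Matrix (Fin m) (Fin n) ℝ) :
    ∃ U : Matrix (Fin m) (Fin n) ℝ, opNorm U ≤ 1 ∧ (Uᴴ * B).trace = nucNorm B := by
  have hH := isHermitian_conjTranspose_mul_self B
  set G := cfc (fun x => (√x)⁻¹) (Bᴴ * B)
  refine ⟨B * G, (opNorm_eq_norm _).trans_le (l2_opNorm_le_one_of_isIdempotentElem ?_), ?_⟩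
  · have hUU : (B * G)ᴴ * (B * G) = cfc (fun x => (√x)⁻¹ * x * (√x)⁻¹) (Bᴴ * B) := by
      rw [conjTranspose_mul, conjTranspose_cfc, Matrix.mul_assoc, ← Matrix.mul_assoc Bᴴ,
        ← Matrix.mul_assoc, hH.cfc_mul_id, cfc_mul_cfc]
    rw [hUU, IsIdempotentElem, cfc_mul_cfc]
    congr 1; ext x
    rcases le_or_gt x 0 with hx | hx
    · simp [Real.sqrt_eq_zero'.2 hx]
    · have : √x ≠ 0 := (Real.sqrt_pos.2 hx).ne'
      field_simp
      rw [Real.sq_sqrt hx.le]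
  · rw [conjTranspose_mul, conjTranspose_cfc, Matrix.mul_assoc, hH.cfc_mul_id,
      nucNorm_eq_trace_cfc_sqrt]
    simp only [inv_mul_eq_div, Real.div_sqrt]

lemma nucNorm_add_le (A B : Matrix (Fin m) (Fin n) ℝ) :
    nucNorm (A + B) ≤ nucNorm A + nucNorm B := by
  obtain ⟨U, hU, hUB⟩ := exists_opNorm_le_one_trace_eq_nucNorm (A + B)
  calc nucNorm (A + B) = (Uᴴ * A).trace + (Uᴴ * B).trace := by
        rw [← hUB, Matrix.mul_add, trace_add]
    _ ≤ opNorm U * nucNorm A + opNorm U * nucNorm B :=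
        add_le_add (trace_conjTranspose_mul_le_opNorm_mul_nucNorm U A)
          (trace_conjTranspose_mul_le_opNorm_mul_nucNorm U B)
    _ ≤ nucNorm A + nucNorm B := by nlinarith [nucNorm_nonneg A, nucNorm_nonneg B]

open scoped MatrixOrder in
lemma nucNorm_add_of_orthogonal {A B : Matrix (Fin m) (Fin n) ℝ}
    (hcol : Aᴴ * B = 0) (hrow : A * Bᴴ = 0) :
    nucNorm (A + B) = nucNorm A + nucNorm B := by
  have hsplit : (A + B)ᴴ * (A + B) = Aᴴ * A + Bᴴ * B := by
    have hcol' : Bᴴ * A = 0 := by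
      rw [← conjTranspose_conjTranspose (Bᴴ * A), conjTranspose_mul, conjTranspose_conjTranspose,
        hcol, conjTranspose_zero]
    rw [conjTranspose_add, Matrix.add_mul, Matrix.mul_add, Matrix.mul_add, hcol, hcol',
      add_zero, zero_add]
  have hprod : Aᴴ * A * (Bᴴ * B) = 0 := by
    rw [Matrix.mul_assoc, ← Matrix.mul_assoc A, hrow, Matrix.zero_mul, Matrix.mul_zero]
  rw [nucNorm_eq_trace_cfc_sqrt, nucNorm_eq_trace_cfc_sqrt, nucNorm_eq_trace_cfc_sqrt, hsplit,
    cfc_sqrt_add_of_mul_eq_zero (posSemidef_conjTranspose_mul_self A).nonneg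
      (posSemidef_conjTranspose_mul_self B).nonneg hprod, trace_add]

lemma nucNorm_le_sqrt_rank_mul_frobNorm (B : Matrix (Fin m) (Fin n) ℝ) :
    nucNorm B ≤ √B.rank * frobNorm B := by
  have hH := isHermitian_conjTranspose_mul_self B
  set μ := hH.eigenvalues
  set S := Finset.univ.filter fun i => μ i ≠ 0
  have hrank : (S.card : ℝ) = B.rank := by
    rw [← rank_conjTranspose_mul_self B, hH.rank_eq_card_non_zero_eigs, Fintype.card_subtype]
  have hfrob : frobNorm B = √(∑ i ∈ S, μ i) := by
    rw [Finset.sum_filter_ne_zero, ← Real.sqrt_sq (frobNorm_nonneg B), frobNorm_sq_eq_trace,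
      hH.trace_eq_sum_eigenvalues]
    simp [μ]
  calc nucNorm B = ∑ i ∈ S, 1 * √(μ i) := by
        rw [nucNorm_eq_sum_sqrt_eigenvalues, Finset.sum_filter_of_ne]
        · simp [μ]
        · intro i _ hi h; simp_all
    _ ≤ √(∑ i ∈ S, 1 ^ 2) * √(∑ i ∈ S, √(μ i) ^ 2) := Real.sum_mul_le_sqrt_mul_sqrt _ _ _
    _ = √B.rank * frobNorm B := by
        have hμ (i : Fin n) : 0 ≤ μ i := (posSemidef_conjTranspose_mul_self B).eigenvalues_nonneg i
        simp [hfrob, ← hrank, Real.sq_sqrt (hμ _)]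

lemma exists_orthogonal_split (M Δ : Matrix (Fin m) (Fin n) ℝ) :
    ∃ D : Matrix (Fin m) (Fin n) ℝ, Mᴴ * D = 0 ∧ M * Dᴴ = 0 ∧
      (Δ - D).rank ≤ 2 * M.rank ∧ frobNorm (Δ - D) ≤ frobNorm Δ := by
  set P := M.rangeProj
  set Q := Mᴴ.rangeProj
  have hPsa : (1 - P)ᴴ = 1 - P := by
    rw [conjTranspose_sub, conjTranspose_one, conjTranspose_rangeProj]
  have hQsa : (1 - Q)ᴴ = 1 - Q := by
    rw [conjTranspose_sub, conjTranspose_one, conjTranspose_rangeProj]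
  have hMP : Mᴴ * (1 - P) = 0 := by
    rw [← hPsa, ← conjTranspose_mul, Matrix.sub_mul, Matrix.one_mul, rangeProj_mul, sub_self,
      conjTranspose_zero]
  have hMQ : M * (1 - Q) = 0 := by
    rw [← conjTranspose_conjTranspose (M * (1 - Q)), conjTranspose_mul, hQsa, Matrix.sub_mul,
      Matrix.one_mul, rangeProj_mul, sub_self, conjTranspose_zero]
  refine ⟨(1 - P) * Δ * (1 - Q), ?_, ?_, ?_, ?_⟩
  · rw [← Matrix.mul_assoc, ← Matrix.mul_assoc, hMP, Matrix.zero_mul, Matrix.zero_mul]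
  · rw [conjTranspose_mul, conjTranspose_mul, hQsa, ← Matrix.mul_assoc, ← Matrix.mul_assoc, hMQ,
      Matrix.zero_mul, Matrix.zero_mul]
  · have hsplit : Δ - (1 - P) * Δ * (1 - Q) = P * Δ + (1 - P) * Δ * Q := by
      simp only [Matrix.sub_mul, Matrix.mul_sub, Matrix.one_mul, Matrix.mul_one]; abel
    rw [hsplit, two_mul]
    refine (rank_add_le _ _).trans (add_le_add ?_ ?_)
    · exact (rank_mul_le_left _ _).trans M.rank_rangeProj_le
    · exact (rank_mul_le_right _ _).trans (Mᴴ.rank_rangeProj_le.trans (rank_conjTranspose M).le)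
  · have hD : frobNorm ((1 - P) * Δ * (1 - Q)) ^ 2 = (Δᴴ * ((1 - P) * Δ * (1 - Q))).trace := by
      rw [frobNorm_sq_eq_trace, conjTranspose_mul, conjTranspose_mul, hPsa, hQsa,
        Matrix.mul_assoc, trace_mul_comm]
      simp only [Matrix.mul_assoc]
      rw [← Matrix.mul_assoc (1 - P) (1 - P), M.isIdempotentElem_rangeProj.one_sub.eq,
        Mᴴ.isIdempotentElem_rangeProj.one_sub.eq]
    have hsq := frobNorm_sub_sq Δ ((1 - P) * Δ * (1 - Q))
    refine (pow_le_pow_iff_left₀ (frobNorm_nonneg _) (frobNorm_nonneg _) two_ne_zero).1 ?_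
    nlinarith [sq_nonneg (frobNorm ((1 - P) * Δ * (1 - Q)))]

lemma nucNorm_add_nucNorm_sub_nucNorm_add_le (M Δ : Matrix (Fin m) (Fin n) ℝ) :
    nucNorm Δ + nucNorm M - nucNorm (M + Δ) ≤ 2 * √(2 * M.rank) * frobNorm Δ := by
  obtain ⟨D, hcol, hrow, hrank, hfrob⟩ := exists_orthogonal_split M Δ
  have hΔ : nucNorm Δ ≤ nucNorm (Δ - D) + nucNorm D := by
    simpa using nucNorm_add_le (Δ - D) D
  have hMD : nucNorm M + nucNorm D ≤ nucNorm (M + Δ) + nucNorm (Δ - D) := by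
    rw [← nucNorm_add_of_orthogonal hcol hrow, ← nucNorm_neg (Δ - D)]
    simpa using nucNorm_add_le (M + Δ) (-(Δ - D))
  have hlow : nucNorm (Δ - D) ≤ √(2 * M.rank) * frobNorm Δ :=
    (nucNorm_le_sqrt_rank_mul_frobNorm _).trans <| mul_le_mul
      (Real.sqrt_le_sqrt (by exact_mod_cast hrank)) hfrob (frobNorm_nonneg _) (Real.sqrt_nonneg _)
  linarith

theorem stmt4_general {m n r : ℕ} (p lam : ℝ) (hp : 0 < p) (hlam : 0 < lam)
    (M : Matrix (Fin m) (Fin n) ℝ) (hM : ∀ i j, 0 ≤ M i j) (hrank : M.rank ≤ r)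
    (Y : Matrix (Fin m) (Fin n) ℝ) (hY : opNorm (Y - p • M) ≤ lam / (2 * p))
    (Mhat : Matrix (Fin m) (Fin n) ℝ)
    (hMhat_min : ∀ M' : Matrix (Fin m) (Fin n) ℝ, (∀ i j, 0 ≤ M' i j) →
      frobNorm (Y - p • Mhat)^2 + lam * nucNorm Mhat ≤
        frobNorm (Y - p • M')^2 + lam * nucNorm M') :
    frobNorm (Mhat - M) ≤ 2 * Real.sqrt (2 * r) * lam / p^2 := by
  set E := Y - p • M
  set Δ := Mhat - M
  have hbasic : p ^ 2 * frobNorm Δ ^ 2 ≤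
      2 * (p * (Eᴴ * Δ).trace) + lam * (nucNorm M - nucNorm (M + Δ)) := by
    have h := hMhat_min M hM
    rw [show Y - p • Mhat = E - p • Δ by simp only [E, Δ, smul_sub]; abel, frobNorm_sub_sq,
      frobNorm_smul_sq, Matrix.mul_smul, trace_smul, smul_eq_mul,
      show Mhat = M + Δ by simp [Δ]] at h
    linarith
  have hdual : 2 * (p * (Eᴴ * Δ).trace) ≤ lam * nucNorm Δ :=
    calc 2 * (p * (Eᴴ * Δ).trace) ≤ 2 * p * (opNorm E * nucNorm Δ) := by
          nlinarith [trace_conjTranspose_mul_le_opNorm_mul_nucNorm E Δ]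
      _ ≤ 2 * p * (lam / (2 * p) * nucNorm Δ) := by gcongr; exact nucNorm_nonneg Δ
      _ = lam * nucNorm Δ := by field_simp
  have hcone : nucNorm Δ + nucNorm M - nucNorm (M + Δ) ≤ 2 * √(2 * r) * frobNorm Δ :=
    (nucNorm_add_nucNorm_sub_nucNorm_add_le M Δ).trans (by gcongr; exact frobNorm_nonneg Δ)
  refine le_div_of_mul_sq_le_mul (by positivity) (by positivity) (frobNorm_nonneg Δ) ?_
  nlinarith [mul_le_mul_of_nonneg_left hcone hlam.le]

theorem stmt4 {m n r : ℕ} (p lam : ℝ) (hp : 0 < p) (hlam : 0 < lam)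
    (M : Matrix (Fin m) (Fin n) ℝ) (hM : ∀ i j, 0 ≤ M i j) (hrank : M.rank ≤ r)
    (Y : Matrix (Fin m) (Fin n) ℝ) (hY : opNorm (Y - p • M) ≤ lam / (2 * p))
    (Mhat : Matrix (Fin m) (Fin n) ℝ) (hMhat_pos : ∀ i j, 0 ≤ Mhat i j)
    (hMhat_min : ∀ M' : Matrix (Fin m) (Fin n) ℝ, (∀ i j, 0 ≤ M' i j) →
      frobNorm (Y - p • Mhat)^2 + lam * nucNorm Mhat ≤
        frobNorm (Y - p • M')^2 + lam * nucNorm M') :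
    frobNorm (Mhat - M) ≤ 2 * Real.sqrt (2 * r) * lam / p^2 :=
  stmt4_general p lam hp hlam M hM hrank Y hY Mhat hMhat_min
end

section
/- (Minimax lower bound from missing entries; holds even for noiseless observations.) Let r, k, ℓ be positive integers, m = rk, n = rℓ, λmax > 0, and σ₂ = √k·λmax. Let S₂ be the set of m×n matrices M with entries in [0, λmax], rank(M) ≤ r, and √(max_i Σ_j M_ij²) + √(max_j Σ_i M_ij²) ≤ 2σ₂. Suppose p ∈ (0,1] satisfies p ≥ r/(2·min(m,n)). Consider the observation model in which Ω is drawn from the Bernoulli sampling model with probability p and the learner observes Ω together with the exact entries M_ij for (i,j) ∈ Ω. Then for every measurable estimator M̂ of M from these observations, sup over M ∈ S₂ of E_M‖M̂ − M‖_F² is at least (r·σ₂²/8)·max{ (1/2)·⌊1/(2p)⌋, 1 − p }, which is at least (1/64)·((1−p)/p)·r·σ₂². -/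
open MeasureTheory ProbabilityTheory Real Matrix

instance matrixMeasurableSpace {m n : ℕ} {α : Type*} [MeasurableSpace α] :
    MeasurableSpace (Matrix (Fin m) (Fin n) α) :=
  (inferInstance : MeasurableSpace ((Fin m) → (Fin n) → α))

/-- Joint law of the noiseless data: for each entry `(i,j)`, independently, with
probability `p` we observe the exact value `M i j` (flag `true`), otherwise nothing. -/
noncomputable def noiselessObsMeasure {m n : ℕ} (p : ℝ) (M : Matrix (Fin m) (Fin n) ℝ) :
    Measure ((Fin m × Fin n) → Bool × ℝ) :=
  Measure.pi fun ij =>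
    ENNReal.ofReal (1 - p) • Measure.dirac (false, 0) +
      ENNReal.ofReal p • Measure.dirac (true, M ij.1 ij.2)


/-! Assouad's method. Let `s = max ⌊1/(2p)⌋ 1 ≤ min k ℓ`. For `u : Fin (r k) → Bool` let `M_u`
equal `λ` on the first `s` columns of the diagonal block of each row `i` with `u i`, and `0`
elsewhere; every `M_u` lies in the class. Flipping `u i` changes `M_u` only in these `s` entries
of row `i`, each by `λ`, and with probability `(1-p)^s` none of them is observed, in which case the
data have the same law under both matrices. So the two risks restricted to that window sum to at
least `(1-p)^s s λ²/2`, and averaging over the hypercube yields some `M_u` with risk at least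
`r k (1-p)^s s λ²/4`. Bernoulli's inequality `(1-p)^s ≥ 1 - s p ≥ 1/2` gives the bound. -/

open Function Finset
open scoped ENNReal

section ProductMeasure

variable {δ : Type*} [DecidableEq δ] {X : δ → Type*} [∀ i, MeasurableSpace (X i)]
  [∀ i, MeasurableSingletonClass (X i)]

theorem pow_card_mul_le_lmarginal {μ : ∀ i, Measure (X i)} [∀ i, SigmaFinite (μ i)]
    {a : ∀ i, X i} {c : ℝ≥0∞} {s : Finset δ} (hc : ∀ i ∈ s, c ≤ μ i {a i})
    (f : (∀ i, X i) → ℝ≥0∞) (x : ∀ i, X i) :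
    c ^ s.card * f (updateFinset x s fun i ↦ a i) ≤ (∫⋯∫⁻_s, f ∂μ) x := by
  have hprod : c ^ s.card ≤ ∏ i : s, μ i {a i} := by
    simpa using Finset.pow_card_le_prod univ (fun i : s ↦ μ i {a i}) c fun i _ ↦ hc i i.2
  calc c ^ s.card * f (updateFinset x s fun i ↦ a i)
      ≤ f (updateFinset x s fun i ↦ a i) *
          Measure.pi (fun i : s ↦ μ i) {fun i : s ↦ a i} := by
        rw [Measure.pi_singleton, mul_comm]
        gcongr
    _ = ∫⁻ y in {fun i : s ↦ a i}, f (updateFinset x s y) ∂Measure.pi fun i : s ↦ μ i :=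
        (lintegral_singleton (fun y ↦ f (updateFinset x s y)) _).symm
    _ ≤ (∫⋯∫⁻_s, f ∂μ) x := setLIntegral_le_lintegral _ _

variable [Fintype δ]

theorem pow_card_mul_lmarginal_compl_le_lintegral {μ : ∀ i, Measure (X i)}
    [∀ i, SigmaFinite (μ i)] {a : ∀ i, X i} {c : ℝ≥0∞} {s : Finset δ}
    (hc : ∀ i ∈ s, c ≤ μ i {a i}) {f : (∀ i, X i) → ℝ≥0∞} (hf : Measurable f) :
    c ^ s.card * (∫⋯∫⁻_sᶜ, f ∂μ) a ≤ ∫⁻ x, f x ∂Measure.pi μ := by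
  have hupd : updateFinset a s (fun i ↦ a i) = a := by
    ext i; by_cases hi : i ∈ s <;> simp [updateFinset, hi]
  calc c ^ s.card * (∫⋯∫⁻_sᶜ, f ∂μ) a
      = c ^ s.card * (∫⋯∫⁻_sᶜ, f ∂μ) (updateFinset a s fun i ↦ a i) := by rw [hupd]
    _ ≤ (∫⋯∫⁻_s, ∫⋯∫⁻_sᶜ, f ∂μ ∂μ) a := pow_card_mul_le_lmarginal hc _ a
    _ = ∫⁻ x, f x ∂Measure.pi μ := by
        rw [lintegral_eq_lmarginal_univ a, ← union_compl s,
          lmarginal_union μ f hf disjoint_compl_right]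

/-- With probability at least `c ^ #s` a sample equals `a` on `s`, and off `s` the two product
measures have the same law. -/
theorem pow_card_mul_le_lintegral_add_lintegral {μ ν : ∀ i, Measure (X i)}
    [∀ i, IsProbabilityMeasure (μ i)] [∀ i, IsProbabilityMeasure (ν i)]
    {a : ∀ i, X i} {c : ℝ≥0∞} {s : Finset δ} (hμ : ∀ i ∈ s, c ≤ μ i {a i})
    (hν : ∀ i ∈ s, c ≤ ν i {a i}) (hμν : ∀ i ∉ s, μ i = ν i)
    {f g : (∀ i, X i) → ℝ≥0∞} (hf : Measurable f) (hg : Measurable g) {B : ℝ≥0∞}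
    (hB : ∀ x, B ≤ f x + g x) :
    c ^ s.card * B ≤ ∫⁻ x, f x ∂Measure.pi μ + ∫⁻ x, g x ∂Measure.pi ν := by
  have hg_compl : (∫⋯∫⁻_sᶜ, g ∂ν) = ∫⋯∫⁻_sᶜ, g ∂μ := by
    ext x
    have hrestrict : (fun i : ↥sᶜ ↦ ν i) = fun i : ↥sᶜ ↦ μ i :=
      funext fun i ↦ (hμν i (mem_compl.mp i.2)).symm
    simp only [lmarginal, hrestrict]
  have hB_compl : B ≤ (∫⋯∫⁻_sᶜ, f ∂μ) a + (∫⋯∫⁻_sᶜ, g ∂μ) a := by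
    simp only [lmarginal]
    have hf' : Measurable fun y : ∀ i : ↥sᶜ, X i ↦ f (updateFinset a sᶜ y) :=
      hf.comp measurable_updateFinset
    rw [← lintegral_add_left hf']
    calc B = ∫⁻ _, B ∂Measure.pi fun i : ↥sᶜ ↦ μ i := by simp
      _ ≤ _ := lintegral_mono fun y ↦ hB _
  calc c ^ s.card * B
      ≤ c ^ s.card * (∫⋯∫⁻_sᶜ, f ∂μ) a + c ^ s.card * (∫⋯∫⁻_sᶜ, g ∂ν) a := by
        rw [hg_compl, ← mul_add]
        gcongr
    _ ≤ _ := add_le_add (pow_card_mul_lmarginal_compl_le_lintegral hμ hf)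
        (pow_card_mul_lmarginal_compl_le_lintegral hν hg)

end ProductMeasure

theorem exists_card_mul_le_sum_of_two_mul_le_add_flip {ι : Type*} [Fintype ι] [DecidableEq ι]
    (I : (ι → Bool) → ι → ℝ≥0∞) {C : ℝ≥0∞}
    (hI : ∀ u i, 2 * C ≤ I u i + I (update u i (!u i)) i) :
    ∃ u, Fintype.card ι * C ≤ ∑ i, I u i := by
  have hflip : ∀ i, ∑ u, I (update u i (!u i)) i = ∑ u, I u i := fun i ↦
    Equiv.sum_comp (Involutive.toPerm (fun u : ι → Bool ↦ update u i (!u i)) fun u ↦ by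
      beta_reduce
      rw [update_idem, update_self, Bool.not_not, update_eq_self]) (I · i)
  obtain ⟨u, -, hu⟩ := ENNReal.exists_le_of_sum_le (univ_nonempty (α := ι → Bool))
    (f := fun _ ↦ 2 * (Fintype.card ι * C)) (g := fun u ↦ 2 * ∑ i, I u i) <| calc
      ∑ _u : ι → Bool, 2 * (Fintype.card ι * C) = ∑ i : ι, ∑ _u : ι → Bool, 2 * C := by
        simp only [sum_const, card_univ, nsmul_eq_mul]; ring
      _ ≤ ∑ i, ∑ u, (I u i + I (update u i (!u i)) i) := by gcongr with i _ u; exact hI u i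
      _ = ∑ u, 2 * ∑ i, I u i := by
        simp only [sum_add_distrib, hflip, ← two_mul, ← mul_sum]; rw [sum_comm]
  exact ⟨u, (ENNReal.mul_le_mul_iff_right two_ne_zero ENNReal.ofNat_ne_top).mp hu⟩

section NoiselessSampling

variable {m n : ℕ} {p : ℝ}

noncomputable def noiselessEntryLaw (p v : ℝ) : Measure (Bool × ℝ) :=
  ENNReal.ofReal (1 - p) • Measure.dirac (false, 0) + ENNReal.ofReal p • Measure.dirac (true, v)

theorem noiselessObsMeasure_eq_pi (p : ℝ) (M : Matrix (Fin m) (Fin n) ℝ) :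
    noiselessObsMeasure p M = Measure.pi fun ij ↦ noiselessEntryLaw p (M ij.1 ij.2) := rfl

theorem isProbabilityMeasure_noiselessEntryLaw (hp : 0 ≤ p) (hp1 : p ≤ 1) (v : ℝ) :
    IsProbabilityMeasure (noiselessEntryLaw p v) := by
  constructor
  simp only [noiselessEntryLaw, Measure.add_apply, Measure.smul_apply, measure_univ, smul_eq_mul,
    mul_one]
  rw [← ENNReal.ofReal_add (by linarith) hp]
  norm_num

theorem ofReal_one_sub_le_noiselessEntryLaw (p v : ℝ) :
    ENNReal.ofReal (1 - p) ≤ noiselessEntryLaw p v {(false, 0)} := by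
  simp [noiselessEntryLaw]

theorem pow_card_mul_le_lintegral_noiselessObsMeasure_add (hp : 0 ≤ p) (hp1 : p ≤ 1)
    {M₁ M₂ : Matrix (Fin m) (Fin n) ℝ} {D : Finset (Fin m × Fin n)}
    (hM : ∀ ij ∉ D, M₁ ij.1 ij.2 = M₂ ij.1 ij.2)
    {f g : (Fin m × Fin n → Bool × ℝ) → ℝ≥0∞} (hf : Measurable f) (hg : Measurable g)
    {B : ℝ≥0∞} (hB : ∀ y, B ≤ f y + g y) :
    ENNReal.ofReal (1 - p) ^ D.card * B ≤
      ∫⁻ y, f y ∂noiselessObsMeasure p M₁ + ∫⁻ y, g y ∂noiselessObsMeasure p M₂ := by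
  have := isProbabilityMeasure_noiselessEntryLaw hp hp1
  rw [noiselessObsMeasure_eq_pi, noiselessObsMeasure_eq_pi]
  exact pow_card_mul_le_lintegral_add_lintegral (a := fun _ ↦ (false, 0))
    (fun _ _ ↦ ofReal_one_sub_le_noiselessEntryLaw _ _)
    (fun _ _ ↦ ofReal_one_sub_le_noiselessEntryLaw _ _)
    (fun ij hij ↦ by rw [hM ij hij]) hf hg hB

end NoiselessSampling

theorem sum_sum_sq_le_frobNorm_sq {m n : ℕ} (W : Fin m → Finset (Fin n))
    (A : Matrix (Fin m) (Fin n) ℝ) : ∑ i, ∑ j ∈ W i, A i j ^ 2 ≤ frobNorm A ^ 2 := by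
  rw [frobNorm, sq_sqrt (by positivity)]
  exact sum_le_sum fun i _ ↦
    sum_le_sum_of_subset_of_nonneg (subset_univ _) fun j _ _ ↦ sq_nonneg _

theorem sq_sub_div_two_le_sq_sub_add_sq_sub (a b x : ℝ) :
    (a - b) ^ 2 / 2 ≤ (x - a) ^ 2 + (x - b) ^ 2 := by
  nlinarith [sq_nonneg (2 * x - a - b)]

section Hypercube

variable {r : ℕ} (k ℓ s : ℕ)

/-- Row `i` lies in the `i / k`-th of `r` horizontal blocks; its window is the first `s` columns
of the matching vertical block. -/
def blockWindow (i : Fin (r * k)) : Finset (Fin (r * ℓ)) :=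
  univ.filter fun j ↦ (i : ℕ) / k * ℓ ≤ j ∧ (j : ℕ) < (i : ℕ) / k * ℓ + s

noncomputable def hypercubeMatrix (lam : ℝ) (u : Fin (r * k) → Bool) :
    Matrix (Fin (r * k)) (Fin (r * ℓ)) ℝ :=
  fun i j ↦ if u i ∧ j ∈ blockWindow k ℓ s i then lam else 0

variable {k ℓ s}

theorem mem_blockWindow {i : Fin (r * k)} {j : Fin (r * ℓ)} :
    j ∈ blockWindow k ℓ s i ↔ (i : ℕ) / k * ℓ ≤ j ∧ (j : ℕ) < (i : ℕ) / k * ℓ + s := by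
  simp [blockWindow]

theorem card_blockWindow (hs : s ≤ ℓ) (i : Fin (r * k)) :
    (blockWindow k ℓ s i).card = s := by
  have hblock : (i / k + 1) * ℓ ≤ r * ℓ :=
    Nat.mul_le_mul_right ℓ (Nat.div_lt_of_lt_mul (mul_comm r k ▸ i.2))
  have hmap : (blockWindow k ℓ s i).map Fin.valEmbedding = Ico (i / k * ℓ) (i / k * ℓ + s : ℕ) := by
    ext x
    simp only [mem_map, mem_blockWindow, Fin.valEmbedding_apply, mem_Ico]
    constructor
    · rintro ⟨j, hj, rfl⟩
      exact hj
    · intro hx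
      exact ⟨⟨x, by rw [add_mul] at hblock; omega⟩, hx, rfl⟩
  rw [← card_map, hmap, Nat.card_Ico]
  omega

theorem div_eq_div_of_mem_blockWindow (hs : s ≤ ℓ) {i : Fin (r * k)} {j : Fin (r * ℓ)}
    (hj : j ∈ blockWindow k ℓ s i) : (i : ℕ) / k = j / ℓ := by
  rw [mem_blockWindow] at hj
  exact (Nat.div_eq_of_lt_le hj.1 (by rw [add_mul]; omega)).symm

theorem card_filter_div_eq_le {N : ℕ} (hk : 0 < k) (q : ℕ) :
    (univ.filter fun i : Fin N ↦ (i : ℕ) / k = q).card ≤ k := by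
  calc (univ.filter fun i : Fin N ↦ (i : ℕ) / k = q).card ≤ (Ico (q * k) (q * k + k)).card := by
        refine card_le_card_of_injOn Fin.val (fun i hi ↦ ?_) Fin.val_injective.injOn
        have hdiv := (Nat.div_eq_iff hk).mp (mem_filter.mp hi).2
        simp only [coe_Ico, Set.mem_Ico]
        omega
    _ = k := by simp

variable {lam : ℝ} {u : Fin (r * k) → Bool}

theorem hypercubeMatrix_nonneg_and_le (hlam : 0 ≤ lam) (i : Fin (r * k)) (j : Fin (r * ℓ)) :
    0 ≤ hypercubeMatrix k ℓ s lam u i j ∧ hypercubeMatrix k ℓ s lam u i j ≤ lam := by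
  unfold hypercubeMatrix
  split_ifs <;> simp [hlam]

theorem sq_hypercubeMatrix_le (i : Fin (r * k)) (j : Fin (r * ℓ)) :
    hypercubeMatrix k ℓ s lam u i j ^ 2 ≤ if j ∈ blockWindow k ℓ s i then lam ^ 2 else 0 := by
  unfold hypercubeMatrix
  split_ifs <;> simp_all [sq_nonneg]

theorem sum_sq_row_hypercubeMatrix_le (hs : s ≤ ℓ) (i : Fin (r * k)) :
    ∑ j, hypercubeMatrix k ℓ s lam u i j ^ 2 ≤ s * lam ^ 2 := by
  calc ∑ j, hypercubeMatrix k ℓ s lam u i j ^ 2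
      ≤ ∑ j, if j ∈ blockWindow k ℓ s i then lam ^ 2 else 0 :=
        sum_le_sum fun j _ ↦ sq_hypercubeMatrix_le i j
    _ = s * lam ^ 2 := by
        rw [sum_ite_mem, univ_inter, sum_const, card_blockWindow hs, nsmul_eq_mul]

theorem sum_sq_col_hypercubeMatrix_le (hk : 0 < k) (hs : s ≤ ℓ) (j : Fin (r * ℓ)) :
    ∑ i, hypercubeMatrix k ℓ s lam u i j ^ 2 ≤ k * lam ^ 2 := by
  calc ∑ i, hypercubeMatrix k ℓ s lam u i j ^ 2
      ≤ ∑ i : Fin (r * k), if (i : ℕ) / k = j / ℓ then lam ^ 2 else 0 := by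
        refine sum_le_sum fun i _ ↦ (sq_hypercubeMatrix_le i j).trans ?_
        by_cases hj : j ∈ blockWindow k ℓ s i
        · simp [hj, div_eq_div_of_mem_blockWindow hs hj]
        · rw [if_neg hj]
          split_ifs <;> positivity
    _ = (univ.filter fun i : Fin (r * k) ↦ (i : ℕ) / k = j / ℓ).card * lam ^ 2 := by
        rw [← sum_filter, sum_const, nsmul_eq_mul]
    _ ≤ k * lam ^ 2 := by
        gcongr
        exact_mod_cast card_filter_div_eq_le hk _

/-- `hypercubeMatrix` factors through `Fin r`, one index per diagonal block. -/
theorem rank_hypercubeMatrix_le : (hypercubeMatrix k ℓ s lam u).rank ≤ r := by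
  let A : Matrix (Fin (r * k)) (Fin r) ℝ := fun i g ↦ if u i ∧ (i : ℕ) / k = g then lam else 0
  let B : Matrix (Fin r) (Fin (r * ℓ)) ℝ :=
    fun g j ↦ if (g : ℕ) * ℓ ≤ j ∧ (j : ℕ) < g * ℓ + s then 1 else 0
  have hfactor : hypercubeMatrix k ℓ s lam u = A * B := by
    ext i j
    have hblock : (i : ℕ) / k < r := Nat.div_lt_of_lt_mul (mul_comm r k ▸ i.2)
    rw [mul_apply, sum_eq_single ⟨i / k, hblock⟩]
    · by_cases hu : u i <;> simp [hypercubeMatrix, mem_blockWindow, A, B, hu]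
    · intro g _ hg
      simp [A, show (i : ℕ) / k ≠ g from fun h ↦ hg (Fin.ext h.symm)]
    · simp
  calc (hypercubeMatrix k ℓ s lam u).rank ≤ A.rank := hfactor ▸ rank_mul_le_left A B
    _ ≤ r := by simpa using rank_le_card_width A

theorem hypercubeMatrix_update_apply_of_notMem (i : Fin (r * k)) (b : Bool)
    {ij : Fin (r * k) × Fin (r * ℓ)} (hij : ij ∉ {i} ×ˢ blockWindow k ℓ s i) :
    hypercubeMatrix k ℓ s lam (update u i b) ij.1 ij.2 = hypercubeMatrix k ℓ s lam u ij.1 ij.2 := by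
  obtain ⟨i', j⟩ := ij
  by_cases hi : i' = i
  · subst hi
    have hj : j ∉ blockWindow k ℓ s i' := fun hj ↦ hij (mem_product.mpr ⟨mem_singleton_self _, hj⟩)
    simp [hypercubeMatrix, hj]
  · simp [hypercubeMatrix, update_of_ne hi]

theorem sq_sub_hypercubeMatrix_flip {i : Fin (r * k)} {j : Fin (r * ℓ)}
    (hj : j ∈ blockWindow k ℓ s i) :
    (hypercubeMatrix k ℓ s lam u i j - hypercubeMatrix k ℓ s lam (update u i (!u i)) i j) ^ 2
      = lam ^ 2 := by
  cases hu : u i <;> simp [hypercubeMatrix, hj, hu]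

theorem sqrt_iSup_row_add_sqrt_iSup_col_le (hk : 0 < k) (hsk : s ≤ k) (hsℓ : s ≤ ℓ)
    (hlam : 0 ≤ lam) :
    √(⨆ i, ∑ j, hypercubeMatrix k ℓ s lam u i j ^ 2) +
        √(⨆ j, ∑ i, hypercubeMatrix k ℓ s lam u i j ^ 2) ≤ 2 * (√k * lam) := by
  have hrow : ⨆ i, ∑ j, hypercubeMatrix k ℓ s lam u i j ^ 2 ≤ k * lam ^ 2 :=
    Real.iSup_le (fun i ↦ (sum_sq_row_hypercubeMatrix_le hsℓ i).trans (by gcongr)) (by positivity)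
  have hcol : ⨆ j, ∑ i, hypercubeMatrix k ℓ s lam u i j ^ 2 ≤ k * lam ^ 2 :=
    Real.iSup_le (sum_sq_col_hypercubeMatrix_le hk hsℓ) (by positivity)
  have hsqrt : √(k * lam ^ 2) = √k * lam := by rw [sqrt_mul k.cast_nonneg, sqrt_sq hlam]
  linarith [sqrt_le_sqrt hrow, sqrt_le_sqrt hcol]

end Hypercube

section RiskLowerBound

variable {r k ℓ : ℕ} (s : ℕ) (p lam : ℝ)
  (Mhat : (Fin (r * k) × Fin (r * ℓ) → Bool × ℝ) → Matrix (Fin (r * k)) (Fin (r * ℓ)) ℝ)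

noncomputable def windowRisk (u : Fin (r * k) → Bool) (i : Fin (r * k)) : ℝ≥0∞ :=
  ∫⁻ y, ENNReal.ofReal (∑ j ∈ blockWindow k ℓ s i, (Mhat y - hypercubeMatrix k ℓ s lam u) i j ^ 2)
    ∂noiselessObsMeasure p (hypercubeMatrix k ℓ s lam u)

variable {s p lam Mhat}

theorem measurable_ofReal_sum_sq_sub (hMhat : Measurable Mhat)
    (M : Matrix (Fin (r * k)) (Fin (r * ℓ)) ℝ) (i : Fin (r * k)) (W : Finset (Fin (r * ℓ))) :
    Measurable fun y ↦ ENNReal.ofReal (∑ j ∈ W, (Mhat y - M) i j ^ 2) :=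
  (Finset.measurable_sum _ fun j _ ↦
    (((measurable_pi_apply j).comp ((measurable_pi_apply i).comp hMhat)).sub_const _).pow_const
      2).ennreal_ofReal

theorem sum_windowRisk_le (hMhat : Measurable Mhat) (u : Fin (r * k) → Bool) :
    ∑ i, windowRisk s p lam Mhat u i ≤
      ∫⁻ y, ENNReal.ofReal (frobNorm (Mhat y - hypercubeMatrix k ℓ s lam u) ^ 2)
        ∂noiselessObsMeasure p (hypercubeMatrix k ℓ s lam u) := by
  simp only [windowRisk]
  rw [← lintegral_finsetSum _ fun i _ ↦ measurable_ofReal_sum_sq_sub hMhat _ i _]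
  refine lintegral_mono fun y ↦ ?_
  rw [← ENNReal.ofReal_sum_of_nonneg fun i _ ↦ by positivity]
  exact ENNReal.ofReal_le_ofReal (sum_sum_sq_le_frobNorm_sq _ _)

theorem two_mul_le_windowRisk_add_windowRisk_flip (hs : s ≤ ℓ) (hp : 0 ≤ p) (hp1 : p ≤ 1)
    (hMhat : Measurable Mhat) (u : Fin (r * k) → Bool) (i : Fin (r * k)) :
    2 * ENNReal.ofReal ((1 - p) ^ s * (s * lam ^ 2 / 4)) ≤
      windowRisk s p lam Mhat u i + windowRisk s p lam Mhat (update u i (!u i)) i := by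
  have hloss : ∀ y, ENNReal.ofReal (s * lam ^ 2 / 2) ≤
      ENNReal.ofReal (∑ j ∈ blockWindow k ℓ s i, (Mhat y - hypercubeMatrix k ℓ s lam u) i j ^ 2) +
        ENNReal.ofReal (∑ j ∈ blockWindow k ℓ s i,
          (Mhat y - hypercubeMatrix k ℓ s lam (update u i (!u i))) i j ^ 2) := by
    intro y
    rw [← ENNReal.ofReal_add (by positivity) (by positivity), ← sum_add_distrib]
    refine ENNReal.ofReal_le_ofReal ?_
    calc (s : ℝ) * lam ^ 2 / 2 = ∑ _j ∈ blockWindow k ℓ s i, lam ^ 2 / 2 := by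
          rw [sum_const, card_blockWindow hs, nsmul_eq_mul]; ring
      _ ≤ _ := sum_le_sum fun j hj ↦ by
          have := sq_sub_div_two_le_sq_sub_add_sq_sub (hypercubeMatrix k ℓ s lam u i j)
            (hypercubeMatrix k ℓ s lam (update u i (!u i)) i j) (Mhat y i j)
          rwa [sq_sub_hypercubeMatrix_flip hj] at this
  have hpair := pow_card_mul_le_lintegral_noiselessObsMeasure_add hp hp1
    (M₁ := hypercubeMatrix k ℓ s lam u) (M₂ := hypercubeMatrix k ℓ s lam (update u i (!u i)))
    (fun ij hij ↦ (hypercubeMatrix_update_apply_of_notMem i (!u i) hij).symm)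
    (measurable_ofReal_sum_sq_sub hMhat _ i _) (measurable_ofReal_sum_sq_sub hMhat _ i _) hloss
  rw [card_product, card_singleton, one_mul, card_blockWindow hs] at hpair
  calc 2 * ENNReal.ofReal ((1 - p) ^ s * (s * lam ^ 2 / 4))
      = ENNReal.ofReal (1 - p) ^ s * ENNReal.ofReal (s * lam ^ 2 / 2) := by
        rw [← ENNReal.ofReal_pow (by linarith), ← ENNReal.ofReal_mul (by positivity),
          ← ENNReal.ofReal_ofNat 2, ← ENNReal.ofReal_mul (by norm_num)]
        ring_nf
    _ ≤ _ := hpair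

theorem exists_hypercubeMatrix_risk_ge (hs : s ≤ ℓ) (hp : 0 ≤ p) (hp1 : p ≤ 1)
    (hMhat : Measurable Mhat) :
    ∃ u : Fin (r * k) → Bool,
      ENNReal.ofReal (r * k * ((1 - p) ^ s * (s * lam ^ 2 / 4))) ≤
        ∫⁻ y, ENNReal.ofReal (frobNorm (Mhat y - hypercubeMatrix k ℓ s lam u) ^ 2)
          ∂noiselessObsMeasure p (hypercubeMatrix k ℓ s lam u) := by
  obtain ⟨u, hu⟩ := exists_card_mul_le_sum_of_two_mul_le_add_flip (windowRisk s p lam Mhat)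
    (two_mul_le_windowRisk_add_windowRisk_flip hs hp hp1 hMhat)
  refine ⟨u, le_trans ?_ (hu.trans (sum_windowRisk_le hMhat u))⟩
  rw [Fintype.card_fin, ENNReal.ofReal_mul (by positivity)]
  norm_cast

end RiskLowerBound

section FloorArithmetic

variable {p : ℝ}

theorem max_half_floor_le (hp : 0 < p) (hp1 : p ≤ 1) :
    max ((1 / 2) * (⌊1 / (2 * p)⌋ : ℝ)) (1 - p) ≤
      2 * (max ⌊1 / (2 * p)⌋₊ 1 : ℕ) * (1 - p) ^ max ⌊1 / (2 * p)⌋₊ 1 := by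
  rw [← natCast_floor_eq_intCast_floor (by positivity)]
  set t := ⌊1 / (2 * p)⌋₊ with ht
  rcases Nat.eq_zero_or_pos t with h0 | hpos
  · rw [h0, show max 0 1 = 1 from rfl]
    push_cast
    exact max_le (by linarith) (by linarith)
  · have hst : max t 1 = t := max_eq_left hpos
    have htp : (t : ℝ) * p ≤ 1 / 2 := by
      have := Nat.floor_le (a := 1 / (2 * p)) (by positivity)
      rw [← ht, le_div_iff₀ (by positivity)] at this
      linarith
    have hbernoulli : 1 + (t : ℝ) * (-p) ≤ (1 + -p) ^ t := one_add_mul_le_pow (by linarith) t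
    have ht1 : (1 : ℝ) ≤ t := by exact_mod_cast hpos
    have hhalf : 1 / 2 ≤ (1 - p) ^ t := by rw [← sub_eq_add_neg] at hbernoulli; linarith
    rw [hst]
    refine max_le ?_ ?_ <;> nlinarith

theorem one_sub_div_le_max_half_floor (hp : 0 < p) (hp1 : p ≤ 1) :
    (1 - p) / (8 * p) ≤ max ((1 / 2) * (⌊1 / (2 * p)⌋ : ℝ)) (1 - p) := by
  rcases le_or_gt (1 / 8) p with h8 | h8
  · exact (div_le_self (by linarith) (by linarith)).trans (le_max_right _ _)
  · refine le_trans ?_ (le_max_left _ _)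
    have hfloor := Int.sub_one_lt_floor (1 / (2 * p))
    have h4 : 4 ≤ 1 / (2 * p) := by rw [le_div_iff₀ (by positivity)]; linarith
    calc (1 - p) / (8 * p) ≤ 1 / (2 * p) / 4 := by
          rw [div_div, div_le_div_iff₀ (by positivity) (by positivity)]; nlinarith
      _ ≤ _ := by linarith

theorem max_floor_one_le_of_div_min_le {r k ℓ : ℕ} (hr : 0 < r) (hk : 0 < k) (hℓ : 0 < ℓ)
    (hp : 0 < p) (hp2 : (r : ℝ) / (2 * min (r * k : ℝ) (r * ℓ : ℝ)) ≤ p) :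
    max ⌊1 / (2 * p)⌋₊ 1 ≤ k ∧ max ⌊1 / (2 * p)⌋₊ 1 ≤ ℓ := by
  have hmin : 0 < min (k : ℝ) ℓ := lt_min (by exact_mod_cast hk) (by exact_mod_cast hℓ)
  have hdiv : 1 / (2 * p) ≤ min (k : ℝ) ℓ := by
    rw [← mul_min_of_nonneg _ _ r.cast_nonneg, div_le_iff₀ (by positivity)] at hp2
    rw [div_le_iff₀ (by positivity)]
    nlinarith [(by exact_mod_cast hr : (0 : ℝ) < r)]
  exact ⟨max_le (Nat.floor_le_of_le (hdiv.trans (min_le_left _ _))) hk,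
    max_le (Nat.floor_le_of_le (hdiv.trans (min_le_right _ _))) hℓ⟩

end FloorArithmetic

theorem stmt17 (r k ℓ : ℕ) (hr : 0 < r) (hk : 0 < k) (hℓ : 0 < ℓ)
    (p lamMax : ℝ) (hlam : 0 < lamMax) (hp : 0 < p) (hp1 : p ≤ 1)
    (hp2 : (r : ℝ) / (2 * min (r * k : ℝ) (r * ℓ : ℝ)) ≤ p)
    (Mhat : ((Fin (r * k) × Fin (r * ℓ)) → Bool × ℝ) → Matrix (Fin (r * k)) (Fin (r * ℓ)) ℝ)
    (hmeas : Measurable Mhat) :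
    (∃ M : Matrix (Fin (r * k)) (Fin (r * ℓ)) ℝ,
      ((∀ i j, 0 ≤ M i j ∧ M i j ≤ lamMax) ∧ M.rank ≤ r ∧
        Real.sqrt (⨆ i, ∑ j, (M i j)^2) + Real.sqrt (⨆ j, ∑ i, (M i j)^2) ≤
          2 * (Real.sqrt k * lamMax)) ∧
      ENNReal.ofReal ((r * (k * lamMax^2) / 8) *
          max ((1 / 2) * (⌊1 / (2 * p)⌋ : ℝ)) (1 - p)) ≤
        ∫⁻ y, ENNReal.ofReal ((frobNorm (Mhat y - M))^2) ∂(noiselessObsMeasure p M)) ∧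
    (1 / 64) * ((1 - p) / p) * r * (k * lamMax^2) ≤
      (r * (k * lamMax^2) / 8) * max ((1 / 2) * (⌊1 / (2 * p)⌋ : ℝ)) (1 - p) := by
  set s := max ⌊1 / (2 * p)⌋₊ 1
  obtain ⟨hsk, hsℓ⟩ := max_floor_one_le_of_div_min_le hr hk hℓ hp hp2
  obtain ⟨u, hu⟩ := exists_hypercubeMatrix_risk_ge (lam := lamMax) hsℓ hp.le hp1 hmeas
  refine ⟨⟨hypercubeMatrix k ℓ s lamMax u, ⟨hypercubeMatrix_nonneg_and_le hlam.le,
    rank_hypercubeMatrix_le, sqrt_iSup_row_add_sqrt_iSup_col_le hk hsk hsℓ hlam.le⟩,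
    le_trans (ENNReal.ofReal_le_ofReal ?_) hu⟩, ?_⟩
  · calc (r * (k * lamMax ^ 2) / 8) * max ((1 / 2) * (⌊1 / (2 * p)⌋ : ℝ)) (1 - p)
        ≤ (r * (k * lamMax ^ 2) / 8) * (2 * s * (1 - p) ^ s) := by
          gcongr; exact max_half_floor_le hp hp1
      _ = r * k * ((1 - p) ^ s * (s * lamMax ^ 2 / 4)) := by ring
  · calc (1 / 64) * ((1 - p) / p) * r * (k * lamMax ^ 2)
        = (r * (k * lamMax ^ 2) / 8) * ((1 - p) / (8 * p)) := by field_simp; ring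
      _ ≤ _ := by gcongr; exact one_sub_div_le_max_half_floor hp hp1
end
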